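/- arXiv:2301.13501 — 2 statements merged into one kernel-verified Lean document; each statement's English description precedes it below -/
import Mathlib

section
/- Fix G ∈ ℝ^{d×K}. Suppose (p, α) ∈ ℝ₊^K × ℝ₊^K satisfies GᵀG α = p/α. Then there exist an open set U ⊆ ℝ^K containing p and a continuously differentiable function α̂ : U → ℝ^K such that α̂(p) = α, GᵀG α̂(q) = q / α̂(q) for all q ∈ U, and the Jacobian satisfies ∂α̂/∂p (p) = (GᵀG + Λ₀)⁻¹ Λ₁, where Λ₀, Λ₁ are diagonal with (Λ₀)_{ii} = p_i/α_i² and (Λ₁)_{ii} = 1/α_i. -/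
/-!
Multiplying `GᵀG α = p / α` by `α` turns it into `Φ α = p` for the smooth map
`Φ a = a ⊙ (GᵀG a)`, whose derivative at `α` is `diag α · GᵀG + diag (GᵀG α) = diag α · (GᵀG + Λ₀)`.
This is invertible because `GᵀG + Λ₀` is positive definite, so the inverse function theorem
gives a local inverse `α̂` of `Φ` near `p`, with derivative `(GᵀG + Λ₀)⁻¹ Λ₁`. Shrinking its
domain so that `α̂` stays positive, `Φ (α̂ q) = q` can be divided back by `α̂ q`.
-/

open Matrix Filter Topology
open scoped ContDiff

section LocalInverse

variable {𝕂 : Type*} [RCLike 𝕂] {E F : Type*} [NormedAddCommGroup E] [NormedSpace 𝕂 E]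
  [CompleteSpace E] [NormedAddCommGroup F] [NormedSpace 𝕂 F]

/- `n ≠ ∞` is needed because being `C^∞` at a point does not give `C^∞` on a neighbourhood. -/
theorem ContDiffAt.exists_isOpen_localInverse {f : E → F} {f' : E ≃L[𝕂] F} {a : E}
    {n : WithTop ℕ∞} {s : Set E} (hf : ContDiffAt 𝕂 n f a)
    (hf' : HasFDerivAt f (f' : E →L[𝕂] F) a) (hn : n ≠ 0) (hn' : n ≠ ∞) (hs : s ∈ 𝓝 a) :
    ∃ (U : Set F) (g : F → E), IsOpen U ∧ f a ∈ U ∧ ContDiffOn 𝕂 n g U ∧ g (f a) = a ∧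
      (∀ y ∈ U, f (g y) = y ∧ g y ∈ s) ∧ HasFDerivAt g (f'.symm : F →L[𝕂] E) (f a) := by
  set g := hf.localInverse hf' hn
  have hstrict := hf.hasStrictFDerivAt' hf' hn
  have hga : g (f a) = a := hf.localInverse_apply_image hf' hn
  obtain ⟨u, hu, hgu⟩ := (hf.to_localInverse hf' hn).contDiffOn le_rfl (absurd · hn')
  have hgs : ∀ᶠ y in 𝓝 (f a), g y ∈ s :=
    (hf.to_localInverse hf' hn).continuousAt.preimage_mem_nhds
      (show s ∈ 𝓝 (g (f a)) by rwa [hga])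
  have hV : u ∩ {y | f (g y) = y ∧ g y ∈ s} ∈ 𝓝 (f a) :=
    inter_mem hu (hstrict.eventually_right_inverse.and hgs)
  exact ⟨interior (u ∩ {y | f (g y) = y ∧ g y ∈ s}), g, isOpen_interior,
    mem_interior_iff_mem_nhds.2 hV, hgu.mono (interior_subset.trans Set.inter_subset_left), hga,
    fun y hy => (interior_subset hy).2, hstrict.to_localInverse.hasFDerivAt⟩

theorem Matrix.exists_isOpen_localInverse {ι : Type*} [Fintype ι] [DecidableEq ι]
    {f : (ι → 𝕂) → ι → 𝕂} {N : Matrix ι ι 𝕂} {a : ι → 𝕂} {n : WithTop ℕ∞} {s : Set (ι → 𝕂)}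
    (hf : ContDiffAt 𝕂 n f a) (hf' : HasFDerivAt f (toLin' N).toContinuousLinearMap a)
    (hN : IsUnit N) (hn : n ≠ 0) (hn' : n ≠ ∞) (hs : s ∈ 𝓝 a) :
    ∃ (U : Set (ι → 𝕂)) (g : (ι → 𝕂) → ι → 𝕂), IsOpen U ∧ f a ∈ U ∧ ContDiffOn 𝕂 n g U ∧
      g (f a) = a ∧ (∀ y ∈ U, f (g y) = y ∧ g y ∈ s) ∧
      HasFDerivAt g (toLin' N⁻¹).toContinuousLinearMap (f a) := by
  let e := (N.toLinearEquiv' hN.invertible).toContinuousLinearEquiv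
  have he : (e : (ι → 𝕂) →L[𝕂] ι → 𝕂) = (toLin' N).toContinuousLinearMap := rfl
  have he_symm : (e.symm : (ι → 𝕂) →L[𝕂] ι → 𝕂) = (toLin' N⁻¹).toContinuousLinearMap := by
    ext1 v
    change ((N.toLinearEquiv' hN.invertible).symm : Module.End 𝕂 (ι → 𝕂)) v = _
    rw [toLinearEquiv'_symm_apply, invOf_eq_nonsing_inv, toLin'_apply]
    rfl
  rw [← he] at hf'
  rw [← he_symm]
  exact hf.exists_isOpen_localInverse hf' hn hn' hs

end LocalInverse

section MulMulVec

variable {𝕜 : Type*} [NontriviallyNormedField 𝕜] [CompleteSpace 𝕜] {ι : Type*} [Fintype ι]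

theorem contDiff_mul_mulVec (A : Matrix ι ι 𝕜) {n : WithTop ℕ∞} :
    ContDiff 𝕜 n fun x : ι → 𝕜 => x * A *ᵥ x :=
  contDiff_id.mul A.mulVecLin.toContinuousLinearMap.contDiff

theorem hasFDerivAt_mul_mulVec [DecidableEq ι] (A : Matrix ι ι 𝕜) (a : ι → 𝕜) :
    HasFDerivAt (fun x : ι → 𝕜 => x * A *ᵥ x)
      (toLin' (diagonal a * A + diagonal (A *ᵥ a))).toContinuousLinearMap a := by
  refine ((hasFDerivAt_id a).mul (toLin' A).toContinuousLinearMap.hasFDerivAt).congr_fderiv ?_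
  ext v i
  simp [-mulVec_mulVec, mulVec_diagonal, mul_comm]

end MulMulVec

namespace Matrix

variable {K : Type*} [Field K] {ι : Type*} [Fintype ι] [DecidableEq ι]

theorem inv_diagonal_of_ne_zero {a : ι → K} (ha : ∀ i, a i ≠ 0) :
    (diagonal a)⁻¹ = diagonal fun i => 1 / a i :=
  inv_eq_left_inv <| by
    rw [diagonal_mul_diagonal, ← diagonal_one]
    exact congrArg diagonal (funext fun i => one_div_mul_cancel (ha i))

theorem diagonal_mul_add_diagonal_mulVec {A : Matrix ι ι K} {a b : ι → K} (ha : ∀ i, a i ≠ 0)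
    (h : A *ᵥ a = fun i => b i / a i) :
    diagonal a * A + diagonal (A *ᵥ a) = diagonal a * (A + diagonal fun i => b i / a i ^ 2) := by
  rw [mul_add, diagonal_mul_diagonal, h]
  congr 2
  funext i
  field_simp [ha i]

theorem posDef_transpose_mul_self_add_diagonal {m : Type*} [Fintype m] (G : Matrix m ι ℝ)
    {c : ι → ℝ} (hc : ∀ i, 0 < c i) : (Gᵀ * G + diagonal c).PosDef := by
  simpa using PosDef.posSemidef_add (posSemidef_conjTranspose_mul_self G) (.diagonal hc)

end Matrix

/-- implicit function for the bargaining solution: if positive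
`(p, α)` satisfies `GᵀG α = p/α`, there is an open set `U ∋ p` and a `C¹`
function `α̂ : U → ℝ^K` with `α̂(p) = α`, solving `GᵀG α̂(q) = q/α̂(q)` on `U`,
whose Jacobian at `p` is `(GᵀG + Λ₀)⁻¹ Λ₁`. -/
theorem stmt_4 (d K : ℕ) (G : Matrix (Fin d) (Fin K) ℝ)
    (p α : Fin K → ℝ) (hp : ∀ i, 0 < p i) (hα : ∀ i, 0 < α i)
    (heq : (Gᵀ * G).mulVec α = fun i => p i / α i) :
    ∃ (U : Set (Fin K → ℝ)) (αhat : (Fin K → ℝ) → (Fin K → ℝ)),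
      IsOpen U ∧ p ∈ U ∧
      ContDiffOn ℝ 1 αhat U ∧
      αhat p = α ∧
      (∀ q ∈ U, (Gᵀ * G).mulVec (αhat q) = fun i => q i / αhat q i) ∧
      HasFDerivAt (𝕜 := ℝ) αhat
        (LinearMap.toContinuousLinearMap
          (Matrix.toLin'
            ((Gᵀ * G + Matrix.diagonal (fun i => p i / (α i) ^ 2))⁻¹ *
              Matrix.diagonal (fun i => 1 / α i)))) p := by
  set A := Gᵀ * G
  have hα₀ : ∀ i, α i ≠ 0 := fun i => (hα i).ne'
  have hM : IsUnit (A + diagonal fun i => p i / α i ^ 2) :=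
    (posDef_transpose_mul_self_add_diagonal G fun i => div_pos (hp i) (pow_pos (hα i) 2)).isUnit
  have hN := (isUnit_diagonal.2 <| Pi.isUnit_iff.2 fun i => (hα₀ i).isUnit).mul hM
  have hΦ := hasFDerivAt_mul_mulVec A α
  rw [diagonal_mul_add_diagonal_mulVec hα₀ heq] at hΦ
  have hΦα : α * A *ᵥ α = p := funext fun i => by simp [heq, mul_div_cancel₀ _ (hα₀ i)]
  have hpos : Set.univ.pi (fun _ => Set.Ioi 0) ∈ 𝓝 α :=
    set_pi_mem_nhds Set.finite_univ fun i _ => Ioi_mem_nhds (hα i)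
  obtain ⟨U, g, hU, hpU, hg, hgα, hgU, hg'⟩ := Matrix.exists_isOpen_localInverse
    (contDiff_mul_mulVec A).contDiffAt hΦ hN one_ne_zero (by simp) hpos
  rw [hΦα] at hpU hgα hg'
  refine ⟨U, g, hU, hpU, hg, hgα, fun q hq => ?_, ?_⟩
  · obtain ⟨hgq, hgq_pos⟩ := hgU q hq
    funext i
    rw [eq_div_iff (hgq_pos i (Set.mem_univ i)).ne', ← congrFun hgq i, Pi.mul_apply, mul_comm]
  · rwa [Matrix.mul_inv_rev, inv_diagonal_of_ne_zero hα₀] at hg'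
end

section
/- Let ℓ_1, ..., ℓ_K : ℝ^d → ℝ each be L-smooth. Let θ ∈ ℝ^d, let g_i = ∇ℓ_i(θ), let G be the matrix with columns g_i, let p ∈ ℝ₊^K with ∑ p_i = 1, let α ∈ ℝ₊^K satisfy GᵀG α = p/α, and set Δθ = Gα and θ' = θ − μΔθ for μ > 0. Then for each i: ℓ_i(θ') ≤ ℓ_i(θ) − μ p_i/α_i + μ²L/2. -/
/-!
Along the segment `t ↦ x + t • v`, the function `f (x + t • v) - t ⟪∇f x, v⟫ - (L/2) t² ‖v‖²` has
derivative `⟪∇f (x + t • v) - ∇f x, v⟫ - L t ‖v‖² ≤ 0` (Cauchy–Schwarz and the Lipschitz bound),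
so it is antitone on `[0, ∞)`: this is the descent lemma. Applied with `v = -μ Gα`, the equation
`GᵀG α = p/α` gives `⟪g i, Gα⟫ = p i / α i` and `‖Gα‖² = ∑ α i (p i / α i) = ∑ p i = 1`.
-/

open scoped RealInnerProductSpace

variable {E : Type*} [NormedAddCommGroup E] [InnerProductSpace ℝ E]

theorem HasGradientAt.hasDerivAt_comp_add_smul [CompleteSpace E] {f : E → ℝ} {f' x v : E}
    {t : ℝ} (hf : HasGradientAt f f' (x + t • v)) :
    HasDerivAt (fun s : ℝ => f (x + s • v)) ⟪f', v⟫ t := by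
  have hline : HasDerivAt (fun s : ℝ => x + s • v) v t := by
    simpa using ((hasDerivAt_id t).smul_const v).const_add x
  have h := hf.hasFDerivAt.comp_hasDerivAt t hline
  rwa [InnerProductSpace.toDual_apply_apply] at h

theorem descent_lemma [CompleteSpace E] {f : E → ℝ} {g : E → E} {L : ℝ}
    (hgrad : ∀ x, HasGradientAt f (g x) x) (hlip : ∀ x y, ‖g x - g y‖ ≤ L * ‖x - y‖)
    (x v : E) : f (x + v) ≤ f x + ⟪g x, v⟫ + L / 2 * ‖v‖ ^ 2 := by
  let φ : ℝ → ℝ := fun t => f (x + t • v) - t * ⟪g x, v⟫ - L / 2 * t ^ 2 * ‖v‖ ^ 2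
  let φ' : ℝ → ℝ := fun t => ⟪g (x + t • v), v⟫ - ⟪g x, v⟫ - L * t * ‖v‖ ^ 2
  have hφ : ∀ t, HasDerivAt φ (φ' t) t := fun t => by
    refine ((((hgrad (x + t • v)).hasDerivAt_comp_add_smul (x := x)).sub
      ((hasDerivAt_id t).mul_const ⟪g x, v⟫)).sub
      (((hasDerivAt_pow 2 t).const_mul (L / 2)).mul_const (‖v‖ ^ 2))).congr_deriv ?_
    simp only [φ', one_mul, Nat.cast_ofNat, pow_one, Nat.add_one_sub_one]
    ring
  have hφ'_nonpos : ∀ t ∈ interior (Set.Ici (0 : ℝ)), φ' t ≤ 0 := by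
    intro t ht
    rw [interior_Ici, Set.mem_Ioi] at ht
    have hdist : ‖g (x + t • v) - g x‖ ≤ L * (t * ‖v‖) := by
      simpa [norm_smul, abs_of_pos ht] using hlip (x + t • v) x
    calc φ' t = ⟪g (x + t • v) - g x, v⟫ - L * t * ‖v‖ ^ 2 := by
          simp only [φ', inner_sub_left]
      _ ≤ ‖g (x + t • v) - g x‖ * ‖v‖ - L * t * ‖v‖ ^ 2 := by
          gcongr; exact real_inner_le_norm _ _
      _ ≤ L * (t * ‖v‖) * ‖v‖ - L * t * ‖v‖ ^ 2 := by gcongr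
      _ = 0 := by ring
  have hanti : AntitoneOn φ (Set.Ici 0) :=
    antitoneOn_of_hasDerivWithinAt_nonpos (convex_Ici 0)
      (fun t _ => (hφ t).continuousAt.continuousWithinAt)
      (fun t _ => (hφ t).hasDerivWithinAt) hφ'_nonpos
  have hφ01 : φ 1 ≤ φ 0 := hanti Set.self_mem_Ici (Set.mem_Ici.2 zero_le_one) zero_le_one
  norm_num [φ] at hφ01
  linarith

theorem norm_sq_sum_smul_eq_sum {ι : Type*} [Fintype ι] (g : ι → E) (p α : ι → ℝ)
    (hα : ∀ i, α i ≠ 0) (heq : ∀ i, ⟪g i, ∑ j, α j • g j⟫ = p i / α i) :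
    ‖∑ j, α j • g j‖ ^ 2 = ∑ i, p i := by
  rw [← real_inner_self_eq_norm_sq, sum_inner]
  refine Finset.sum_congr rfl fun i _ => ?_
  rw [real_inner_smul_left, heq i, mul_div_cancel₀ _ (hα i)]

theorem stmt_6_general (d K : ℕ) (ℓ : Fin K → EuclideanSpace ℝ (Fin d) → ℝ)
    (g : Fin K → EuclideanSpace ℝ (Fin d) → EuclideanSpace ℝ (Fin d)) (L : ℝ)
    (hgrad : ∀ i x, HasGradientAt (ℓ i) (g i x) x)
    (hlip : ∀ i x y, ‖g i x - g i y‖ ≤ L * ‖x - y‖)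
    (θ : EuclideanSpace ℝ (Fin d))
    (p α : Fin K → ℝ)
    (hpsum : ∑ i, p i = 1)
    (hα : ∀ i, 0 < α i)
    (heq : ∀ i, ⟪g i θ, ∑ j, α j • g j θ⟫ = p i / α i)
    (μ : ℝ) :
    ∀ i, ℓ i (θ - μ • ∑ j, α j • g j θ) ≤
      ℓ i θ - μ * (p i / α i) + μ ^ 2 * L / 2 := by
  intro i
  have hΔ : ‖∑ j, α j • g j θ‖ ^ 2 = 1 :=
    (norm_sq_sum_smul_eq_sum _ p α (fun j => (hα j).ne') heq).trans hpsum
  have h := descent_lemma (hgrad i) (hlip i) θ (-(μ • ∑ j, α j • g j θ))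
  rw [← sub_eq_add_neg, inner_neg_right, real_inner_smul_right, heq i, norm_neg, norm_smul,
    mul_pow, hΔ, Real.norm_eq_abs, sq_abs] at h
  linarith

/-- per-task descent: with `L`-smooth losses `ℓ i`, gradients
`g i = ∇ℓ_i(θ)`, a positive probability vector `p`, a positive `α` with
`GᵀG α = p/α` (i.e. `⟪g i, Gα⟫ = p_i/α_i`), `Δθ = Gα = ∑ α_i g_i` and
`θ' = θ − μ Δθ` with `μ > 0`, we have
`ℓ_i(θ') ≤ ℓ_i(θ) − μ p_i/α_i + μ²L/2` for each `i`. -/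
theorem stmt_6 (d K : ℕ) (ℓ : Fin K → EuclideanSpace ℝ (Fin d) → ℝ)
    (g : Fin K → EuclideanSpace ℝ (Fin d) → EuclideanSpace ℝ (Fin d)) (L : ℝ)
    (hgrad : ∀ i x, HasGradientAt (ℓ i) (g i x) x)
    (hlip : ∀ i x y, ‖g i x - g i y‖ ≤ L * ‖x - y‖)
    (θ : EuclideanSpace ℝ (Fin d))
    (p α : Fin K → ℝ)
    (hp : ∀ i, 0 < p i) (hpsum : ∑ i, p i = 1)
    (hα : ∀ i, 0 < α i)
    (heq : ∀ i, ⟪g i θ, ∑ j, α j • g j θ⟫ = p i / α i)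
    (μ : ℝ) (hμ : 0 < μ) :
    ∀ i, ℓ i (θ - μ • ∑ j, α j • g j θ) ≤
      ℓ i θ - μ * (p i / α i) + μ ^ 2 * L / 2 :=
  stmt_6_general d K ℓ g L hgrad hlip θ p α hpsum hα heq μ
end
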